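/- arXiv:2303.00873 — 5 statements merged into one kernel-verified Lean document; each statement's English description precedes it below -/
import Mathlib

section
/- If δ ∈ (0,1) and the sample size satisfies M ≥ (1/(2(ε−α)²))·log(L/δ), then the probability of the event {ω ∈ Ω : 𝕏₀^{α,M}(ω) ⊆ 𝕏₀^ε} is at least 1 − δ. -/
/-!
An infeasible `x ∈ Ξ` violates some constraint `k`, i.e. `μ (G k x) < 1 - ε`, and it survives
sampling only if the empirical frequency of `G k x` exceeds its mean by at least `ε - α`. The
centred indicators are independent and sub-Gaussian with parameter `1/4` (Hoeffding's lemma), so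
this happens with probability at most `exp (-2M(ε - α)²) ≤ δ / L`; a union bound over the at most
`L` infeasible points finishes the proof.
-/

open MeasureTheory ProbabilityTheory Real

section Hoeffding

variable {Ω E : Type*} [MeasurableSpace Ω] [MeasurableSpace E] {P : Measure Ω}
  [IsProbabilityMeasure P] {μ : Measure E} {A : Set E}

lemma hasSubgaussianMGF_indicator_comp_sub {Y : Ω → E} (hY : Measurable Y) (hlaw : P.map Y = μ)
    (hA : MeasurableSet A) :
    HasSubgaussianMGF (fun ω ↦ A.indicator (fun _ ↦ (1 : ℝ)) (Y ω) - μ.real A) 4⁻¹ P := by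
  have hmeas : Measurable fun ω ↦ A.indicator (fun _ ↦ (1 : ℝ)) (Y ω) :=
    (measurable_const.indicator hA).comp hY
  have hmean : P[fun ω ↦ A.indicator (fun _ ↦ (1 : ℝ)) (Y ω)] = μ.real A := calc
    _ = ∫ y, A.indicator (fun _ ↦ (1 : ℝ)) y ∂(P.map Y) :=
      (integral_map hY.aemeasurable (measurable_const.indicator hA).aestronglyMeasurable).symm
    _ = μ.real A := by rw [hlaw, integral_indicator_const _ hA, smul_eq_mul, mul_one]
  have hIcc : ∀ ω, A.indicator (fun _ ↦ (1 : ℝ)) (Y ω) ∈ Set.Icc 0 1 := fun ω ↦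
    ⟨Set.indicator_nonneg (fun _ _ ↦ zero_le_one) _,
      Set.indicator_le_self' (fun _ _ ↦ zero_le_one) _⟩
  have hsub := hasSubgaussianMGF_of_mem_Icc (μ := P) hmeas.aemeasurable (ae_of_all _ hIcc)
  rw [hmean] at hsub
  convert hsub using 1
  norm_num

lemma measureReal_sum_indicator_sub_ge_le {ι : Type*} {Λ : ι → Ω → E}
    (hΛ : ∀ j, Measurable (Λ j)) (hindep : iIndepFun Λ P) (hlaw : ∀ j, P.map (Λ j) = μ)
    (hA : MeasurableSet A) (s : Finset ι) {t : ℝ} (ht : 0 ≤ t) :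
    P.real {ω | t ≤ ∑ j ∈ s, (A.indicator (fun _ ↦ (1 : ℝ)) (Λ j ω) - μ.real A)} ≤
      exp (-(2 * t ^ 2 / s.card)) := by
  have hindep_centred := hindep.comp (fun _ y ↦ A.indicator (fun _ ↦ (1 : ℝ)) y - μ.real A)
    (fun _ ↦ (measurable_const.indicator hA).sub_const _)
  have hoeffding := HasSubgaussianMGF.measure_sum_ge_le_of_iIndepFun hindep_centred
    (c := fun _ ↦ 4⁻¹) (s := s)
    (fun j _ ↦ hasSubgaussianMGF_indicator_comp_sub (hΛ j) (hlaw j) hA) ht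
  refine hoeffding.trans_eq ?_
  rw [Finset.sum_const, nsmul_eq_mul]
  push_cast
  congr 1
  ring

lemma measureReal_le_avg_indicator_le {M : ℕ} (hM : 0 < M) {Λ : Fin M → Ω → E}
    (hΛ : ∀ j, Measurable (Λ j)) (hindep : iIndepFun Λ P) (hlaw : ∀ j, P.map (Λ j) = μ)
    (hA : MeasurableSet A) {p q : ℝ} (hp : μ.real A ≤ p) (hpq : p ≤ q) :
    P.real {ω | q ≤ (1 / M : ℝ) * ∑ j, A.indicator (fun _ ↦ (1 : ℝ)) (Λ j ω)} ≤
      exp (-(2 * (q - p) ^ 2 * M)) := by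
  have hM' : (0 : ℝ) < M := by exact_mod_cast hM
  calc _ ≤ P.real {ω | M * (q - p) ≤
          ∑ j, (A.indicator (fun _ ↦ (1 : ℝ)) (Λ j ω) - μ.real A)} := by
        refine measureReal_mono (fun ω hω ↦ ?_) (measure_ne_top _ _)
        simp only [Set.mem_ofPred_eq, Finset.sum_sub_distrib, Finset.sum_const, Finset.card_univ,
          Fintype.card_fin, nsmul_eq_mul] at hω ⊢
        rw [one_div, le_inv_mul_iff₀ hM'] at hω
        linarith [mul_le_mul_of_nonneg_left hp hM'.le]
    _ ≤ exp (-(2 * (M * (q - p)) ^ 2 / (Finset.univ : Finset (Fin M)).card)) :=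
        measureReal_sum_indicator_sub_ge_le hΛ hindep hlaw hA _
          (mul_nonneg hM'.le (sub_nonneg.2 hpq))
    _ = exp (-(2 * (q - p) ^ 2 * M)) := by
        rw [Finset.card_univ, Fintype.card_fin]
        congr 1
        field_simp

end Hoeffding

lemma mul_exp_neg_mul_le_of_log_div_le {L δ c m : ℝ} (hL : 0 < L) (hδ : 0 < δ) (hc : 0 < c)
    (hm : 1 / c * log (L / δ) ≤ m) : L * exp (-(c * m)) ≤ δ := by
  have h : log (L / δ) ≤ c * m := by
    rwa [one_div, inv_mul_le_iff₀ hc] at hm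
  rw [log_le_iff_le_exp (by positivity), div_le_iff₀ hδ] at h
  rw [exp_neg, ← div_eq_mul_inv, div_le_iff₀ (exp_pos _)]
  linarith

lemma one_sub_card_mul_le_measureReal_subset {Ω X : Type*} [MeasurableSpace Ω] {P : Measure Ω}
    [IsProbabilityMeasure P] (Ξ : Finset X) {S : Ω → Set X} {F : Set X} (hS : ∀ ω, S ω ⊆ Ξ)
    {b : ℝ} (hb0 : 0 ≤ b)
    (hb : ∀ x ∈ Ξ, x ∉ F → P.real {ω | x ∈ S ω} ≤ b) :
    1 - Ξ.card * b ≤ P.real {ω | S ω ⊆ F} := by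
  classical
  have hbad : {ω | S ω ⊆ F}ᶜ ⊆ ⋃ x ∈ Ξ.filter (· ∉ F), {ω | x ∈ S ω} := by
    intro ω hω
    obtain ⟨x, hxS, hxF⟩ := Set.not_subset.1 hω
    exact Set.mem_biUnion (Finset.mem_filter.2 ⟨hS ω hxS, hxF⟩) hxS
  have hunion : P.real {ω | S ω ⊆ F}ᶜ ≤ Ξ.card * b := calc
    _ ≤ ∑ x ∈ Ξ.filter (· ∉ F), P.real {ω | x ∈ S ω} :=
      (measureReal_mono hbad (measure_ne_top _ _)).trans (measureReal_biUnion_finset_le _ _)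
    _ ≤ (Ξ.filter (· ∉ F)).card * b := by
      simpa using Finset.sum_le_sum fun x hx ↦
        hb x (Finset.mem_filter.1 hx).1 (Finset.mem_filter.1 hx).2
    _ ≤ Ξ.card * b := by gcongr; exact Finset.filter_subset _ _
  have htotal : 1 ≤ P.real {ω | S ω ⊆ F} + P.real {ω | S ω ⊆ F}ᶜ := by
    simpa using measureReal_union_le (μ := P) {ω | S ω ⊆ F} {ω | S ω ⊆ F}ᶜ
  linarith

theorem sampled_feasible_subset_of_large_M_general
    {Ω : Type*} [MeasurableSpace Ω] (P : Measure Ω) [IsProbabilityMeasure P]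
    {E : Type*} [MeasurableSpace E] (μ : Measure E)
    {M : ℕ} (hM : 1 ≤ M) (Λ : Fin M → Ω → E)
    (hΛmeas : ∀ j, Measurable (Λ j))
    (hΛindep : iIndepFun Λ P)
    (hΛlaw : ∀ j, Measure.map (Λ j) P = μ)
    {X : Type*} (Ξ : Finset X) {L : ℕ} (hLcard : Ξ.card = L) (hL : 1 ≤ L)
    {N : ℕ}
    (G : Fin (2 * N) → X → Set E) (hG : ∀ k x, MeasurableSet (G k x))
    {ε α : ℝ} (hα : α ∈ Set.Ico (0 : ℝ) ε)
    {δ : ℝ} (hδ : δ ∈ Set.Ioo (0 : ℝ) 1)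
    (hMbound : (M : ℝ) ≥ 1 / (2 * (ε - α) ^ 2) * Real.log (L / δ)) :
    1 - δ ≤
      (P {ω | {x : X | x ∈ Ξ ∧ ∀ k : Fin (2 * N),
            1 - α ≤ (1 / M : ℝ) * ∑ j, (G k x).indicator (fun _ => (1 : ℝ)) (Λ j ω)}
          ⊆ {x : X | x ∈ Ξ ∧ ∀ k : Fin (2 * N), 1 - ε ≤ (μ (G k x)).toReal}}).toReal := by
  have hbound : ∀ x ∈ Ξ, x ∉ {x : X | x ∈ Ξ ∧ ∀ k : Fin (2 * N), 1 - ε ≤ μ.real (G k x)} →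
      P.real {ω | x ∈ {x : X | x ∈ Ξ ∧ ∀ k : Fin (2 * N),
        1 - α ≤ (1 / M : ℝ) * ∑ j, (G k x).indicator (fun _ => (1 : ℝ)) (Λ j ω)}} ≤
      exp (-(2 * (ε - α) ^ 2 * M)) := by
    intro x hx hxF
    obtain ⟨k, hk⟩ : ∃ k, ¬1 - ε ≤ μ.real (G k x) := not_forall.1 fun h ↦ hxF ⟨hx, h⟩
    calc _ ≤ P.real {ω | 1 - α ≤
            (1 / M : ℝ) * ∑ j, (G k x).indicator (fun _ => (1 : ℝ)) (Λ j ω)} :=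
          measureReal_mono (fun ω hω ↦ hω.2 k) (measure_ne_top _ _)
      _ ≤ _ := by
          simpa only [sub_sub_sub_cancel_left] using
            measureReal_le_avg_indicator_le hM hΛmeas hΛindep hΛlaw (hG k x) (not_le.1 hk).le
              (sub_le_sub_left hα.2.le 1)
  have hLδ : L * exp (-(2 * (ε - α) ^ 2 * M)) ≤ δ :=
    mul_exp_neg_mul_le_of_log_div_le (by exact_mod_cast hL) hδ.1
      (by have := sub_pos.2 hα.2; positivity) hMbound
  have hunion := one_sub_card_mul_le_measureReal_subset Ξ (fun ω x hx ↦ hx.1) (exp_nonneg _) hbound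
  rw [hLcard] at hunion
  exact (sub_le_sub_left hLδ 1).trans hunion

/-- If `δ ∈ (0,1)` and `M ≥ (1/(2(ε−α)²))·log(L/δ)`, then the probability that
the sampled feasible set `𝕏₀^{α,M}(ω)` is contained in the feasible set `𝕏₀^ε`
is at least `1 − δ`. -/
theorem sampled_feasible_subset_of_large_M
    {Ω : Type*} [MeasurableSpace Ω] (P : Measure Ω) [IsProbabilityMeasure P]
    {E : Type*} [MeasurableSpace E] (μ : Measure E) [IsProbabilityMeasure μ]
    {M : ℕ} (hM : 1 ≤ M) (Λ : Fin M → Ω → E)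
    (hΛmeas : ∀ j, Measurable (Λ j))
    (hΛindep : iIndepFun Λ P)
    (hΛlaw : ∀ j, Measure.map (Λ j) P = μ)
    {X : Type*} (Ξ : Finset X) {L : ℕ} (hLcard : Ξ.card = L) (hL : 1 ≤ L)
    {N : ℕ} (hN : 1 ≤ N)
    (G : Fin (2 * N) → X → Set E) (hG : ∀ k x, MeasurableSet (G k x))
    {ε α : ℝ} (hε : ε ∈ Set.Ioo (0 : ℝ) 1) (hα : α ∈ Set.Ico (0 : ℝ) ε)
    {δ : ℝ} (hδ : δ ∈ Set.Ioo (0 : ℝ) 1)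
    (hMbound : (M : ℝ) ≥ 1 / (2 * (ε - α) ^ 2) * Real.log (L / δ)) :
    1 - δ ≤
      (P {ω | {x : X | x ∈ Ξ ∧ ∀ k : Fin (2 * N),
            1 - α ≤ (1 / M : ℝ) * ∑ j, (G k x).indicator (fun _ => (1 : ℝ)) (Λ j ω)}
          ⊆ {x : X | x ∈ Ξ ∧ ∀ k : Fin (2 * N), 1 - ε ≤ (μ (G k x)).toReal}}).toReal :=
  sampled_feasible_subset_of_large_M_general P μ hM Λ hΛmeas hΛindep hΛlaw Ξ hLcard hL G hG hα hδ
    hMbound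
end

section
/- For every point x ∈ Ξ that does not belong to 𝕏₀^ε (i.e., μ(G_l(x)) < 1 − ε for some index l ∈ {1,…,2N}), the probability of the event {ω ∈ Ω : x ∈ 𝕏₀^{α,M}(ω)} is at most exp(−2M(ε−α)²). -/
/-!
If `μ (G l x) < 1 - ε`, then `x` can only be feasible for the sampled problem when the empirical
frequency of `G l x` among the `M` samples exceeds its mean by at least `ε - α`. The indicators
`1_{G l x} (Λ j)` are independent and `[0, 1]`-valued, hence `1/4`-sub-Gaussian once centred
(Hoeffding's lemma), and Hoeffding's inequality bounds that probability by `exp (-2 M (ε - α)²)`.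
-/

open MeasureTheory ProbabilityTheory

section EmpiricalFrequency

variable {Ω E : Type*} [MeasurableSpace Ω] [MeasurableSpace E] {P : Measure Ω}
  {μ : Measure E} {S : Set E}

lemma integral_indicator_comp_of_map_eq {Λ : Ω → E} (hΛ : Measurable Λ) (hΛlaw : P.map Λ = μ)
    (hS : MeasurableSet S) :
    ∫ ω, S.indicator (fun _ => (1 : ℝ)) (Λ ω) ∂P = μ.real S := by
  rw [← integral_map hΛ.aemeasurable (by fun_prop), hΛlaw, integral_indicator_const _ hS,
    smul_eq_mul, mul_one]

lemma hasSubgaussianMGF_indicator_comp_sub_s1 [IsProbabilityMeasure P] {Λ : Ω → E}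
    (hΛ : Measurable Λ) (hΛlaw : P.map Λ = μ) (hS : MeasurableSet S) :
    HasSubgaussianMGF (fun ω => S.indicator (fun _ => (1 : ℝ)) (Λ ω) - μ.real S) (1 / 4) P := by
  have h := hasSubgaussianMGF_of_mem_Icc (μ := P)
    (X := fun ω => S.indicator (fun _ => (1 : ℝ)) (Λ ω)) (a := 0) (b := 1)
    ((measurable_const.indicator hS).comp hΛ).aemeasurable
    (ae_of_all P fun ω => by by_cases hω : Λ ω ∈ S <;> simp [hω])
  rw [integral_indicator_comp_of_map_eq hΛ hΛlaw hS] at h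
  convert h using 1
  norm_num

lemma measureReal_card_mul_add_le_sum_indicator_le [IsProbabilityMeasure P] {ι : Type*}
    [Fintype ι] {Λ : ι → Ω → E} (hΛmeas : ∀ j, Measurable (Λ j)) (hΛindep : iIndepFun Λ P)
    (hΛlaw : ∀ j, P.map (Λ j) = μ) (hS : MeasurableSet S) {t : ℝ} (ht : 0 ≤ t) :
    P.real {ω | Fintype.card ι * μ.real S + t ≤ ∑ j, S.indicator (fun _ => (1 : ℝ)) (Λ j ω)} ≤
      Real.exp (-2 * t ^ 2 / Fintype.card ι) := by
  have hindep : iIndepFun (fun j ω => S.indicator (fun _ => (1 : ℝ)) (Λ j ω) - μ.real S) P :=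
    hΛindep.comp (fun _ e => S.indicator (fun _ => (1 : ℝ)) e - μ.real S)
      fun _ => (measurable_const.indicator hS).sub_const _
  have hoeffding := HasSubgaussianMGF.measure_sum_ge_le_of_iIndepFun hindep (s := Finset.univ)
    (fun j _ => hasSubgaussianMGF_indicator_comp_sub_s1 (hΛmeas j) (hΛlaw j) hS) ht
  calc P.real {ω | Fintype.card ι * μ.real S + t ≤ ∑ j, S.indicator (fun _ => (1 : ℝ)) (Λ j ω)}
      = P.real {ω | t ≤ ∑ j, (S.indicator (fun _ => (1 : ℝ)) (Λ j ω) - μ.real S)} := by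
        simp only [Finset.sum_sub_distrib, Finset.sum_const, Finset.card_univ, nsmul_eq_mul,
          le_sub_iff_add_le']
    _ ≤ _ := hoeffding
    _ = Real.exp (-2 * t ^ 2 / Fintype.card ι) := by
        simp only [Finset.sum_const, Finset.card_univ, nsmul_eq_mul]
        push_cast
        ring_nf

end EmpiricalFrequency

theorem prob_infeasible_in_sampled_set_le_general
    {Ω : Type*} [MeasurableSpace Ω] (P : Measure Ω) [IsProbabilityMeasure P]
    {E : Type*} [MeasurableSpace E] (μ : Measure E)
    {M : ℕ} (hM : 1 ≤ M) (Λ : Fin M → Ω → E)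
    (hΛmeas : ∀ j, Measurable (Λ j))
    (hΛindep : iIndepFun Λ P)
    (hΛlaw : ∀ j, Measure.map (Λ j) P = μ)
    {X : Type*} (Ξ : Finset X)
    {N : ℕ}
    (G : Fin (2 * N) → X → Set E) (hG : ∀ k x, MeasurableSet (G k x))
    {ε α : ℝ} (hα : α ∈ Set.Ico (0 : ℝ) ε)
    (x : X)
    (hxout : ∃ l : Fin (2 * N), (μ (G l x)).toReal < 1 - ε) :
    (P {ω | x ∈ Ξ ∧ ∀ k : Fin (2 * N),
          1 - α ≤ (1 / M : ℝ) * ∑ j, (G k x).indicator (fun _ => (1 : ℝ)) (Λ j ω)}).toReal ≤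
      Real.exp (-2 * M * (ε - α) ^ 2) := by
  obtain ⟨l, hl⟩ := hxout
  have hM₀ : (0 : ℝ) < M := by exact_mod_cast hM
  have hsub : {ω | x ∈ Ξ ∧ ∀ k : Fin (2 * N),
        1 - α ≤ (1 / M : ℝ) * ∑ j, (G k x).indicator (fun _ => (1 : ℝ)) (Λ j ω)} ⊆
      {ω | Fintype.card (Fin M) * μ.real (G l x) + M * (ε - α) ≤
        ∑ j, (G l x).indicator (fun _ => (1 : ℝ)) (Λ j ω)} := by
    rintro ω ⟨-, hω⟩
    have hfreq := hω l
    rw [one_div, inv_mul_eq_div, le_div_iff₀ hM₀] at hfreq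
    have hmean := mul_le_mul_of_nonneg_left hl.le hM₀.le
    rw [Set.mem_ofPred_eq, Fintype.card_fin, measureReal_def]
    linarith
  calc (P _).toReal ≤ P.real _ := measureReal_mono hsub
    _ ≤ Real.exp (-2 * (M * (ε - α)) ^ 2 / Fintype.card (Fin M)) :=
      measureReal_card_mul_add_le_sum_indicator_le hΛmeas hΛindep hΛlaw (hG l x)
        (mul_nonneg hM₀.le (sub_nonneg.2 hα.2.le))
    _ = Real.exp (-2 * M * (ε - α) ^ 2) := by
      rw [Fintype.card_fin]
      field_simp

/-- For every `x ∈ Ξ` not in the feasible set `𝕏₀^ε` (i.e. `μ(G_l(x)) < 1 − ε`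
for some `l`), the probability that `x` belongs to the sampled feasible set `𝕏₀^{α,M}(ω)`
is at most `exp(−2M(ε−α)²)`. -/
theorem prob_infeasible_in_sampled_set_le
    {Ω : Type*} [MeasurableSpace Ω] (P : Measure Ω) [IsProbabilityMeasure P]
    {E : Type*} [MeasurableSpace E] (μ : Measure E) [IsProbabilityMeasure μ]
    {M : ℕ} (hM : 1 ≤ M) (Λ : Fin M → Ω → E)
    (hΛmeas : ∀ j, Measurable (Λ j))
    (hΛindep : iIndepFun Λ P)
    (hΛlaw : ∀ j, Measure.map (Λ j) P = μ)
    {X : Type*} (Ξ : Finset X) {L : ℕ} (hLcard : Ξ.card = L) (hL : 1 ≤ L)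
    {N : ℕ} (hN : 1 ≤ N)
    (G : Fin (2 * N) → X → Set E) (hG : ∀ k x, MeasurableSet (G k x))
    {ε α : ℝ} (hε : ε ∈ Set.Ioo (0 : ℝ) 1) (hα : α ∈ Set.Ico (0 : ℝ) ε)
    (x : X) (hxΞ : x ∈ Ξ)
    (hxout : ∃ l : Fin (2 * N), (μ (G l x)).toReal < 1 - ε) :
    (P {ω | x ∈ Ξ ∧ ∀ k : Fin (2 * N),
          1 - α ≤ (1 / M : ℝ) * ∑ j, (G k x).indicator (fun _ => (1 : ℝ)) (Λ j ω)}).toReal ≤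
      Real.exp (-2 * M * (ε - α) ^ 2) :=
  prob_infeasible_in_sampled_set_le_general P μ hM Λ hΛmeas hΛindep hΛlaw Ξ G hG hα x hxout
end

section
/- The probability of the event that the sampled feasible set is not contained in the feasible set, 𝒫({ω ∈ Ω : 𝕏₀^{α,M}(ω) ⊄ 𝕏₀^ε}), is at most L·exp(−2M(ε−α)²). -/
/-! If some `x ∈ Ξ` is sampled-feasible but not feasible, then for a `k` with
`μ (G k x) < 1 - ε` the empirical frequency of `G k x` exceeds its mean by at least `ε - α`.
The centred indicators are `1/4`-sub-Gaussian (Hoeffding's lemma), so by Hoeffding's inequality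
this has probability at most `exp (-2M(ε - α)²)`; a union bound over the `L` points of `Ξ`
gives the claim. -/

open MeasureTheory ProbabilityTheory

section Hoeffding

variable {Ω E : Type*} [MeasurableSpace Ω] [MeasurableSpace E] {P : Measure Ω}
  {μ : Measure E} {S : Set E}

lemma integral_indicator_one_comp {Y : Ω → E} (hY : Measurable Y) (hlaw : P.map Y = μ)
    (hS : MeasurableSet S) :
    ∫ ω, S.indicator (fun _ => (1 : ℝ)) (Y ω) ∂P = μ.real S := by
  rw [← hlaw, map_measureReal_apply hY hS, ← integral_indicator_one (hY hS)]
  rfl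

lemma hasSubgaussianMGF_indicator_sub_measureReal [IsProbabilityMeasure P] {Y : Ω → E}
    (hY : Measurable Y) (hlaw : P.map Y = μ) (hS : MeasurableSet S) :
    HasSubgaussianMGF (fun ω => S.indicator (fun _ => (1 : ℝ)) (Y ω) - μ.real S) (1 / 4) P := by
  have h := hasSubgaussianMGF_of_mem_Icc (μ := P)
    (X := fun ω => S.indicator (fun _ => (1 : ℝ)) (Y ω)) (a := 0) (b := 1)
    ((measurable_const.indicator hS).comp hY).aemeasurable
    (ae_of_all _ fun ω => by by_cases h : Y ω ∈ S <;> simp [h])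
  rw [integral_indicator_one_comp hY hlaw hS] at h
  convert h using 1
  norm_num

lemma measureReal_sum_indicator_ge_le [IsProbabilityMeasure P] {ι : Type*} [Fintype ι]
    {Λ : ι → Ω → E} (hΛmeas : ∀ j, Measurable (Λ j)) (hΛindep : iIndepFun Λ P)
    (hΛlaw : ∀ j, P.map (Λ j) = μ) (hS : MeasurableSet S) {δ : ℝ} (hδ : 0 ≤ δ) :
    P.real {ω | Fintype.card ι * (μ.real S + δ) ≤ ∑ j, S.indicator (fun _ => (1 : ℝ)) (Λ j ω)}
      ≤ Real.exp (-2 * Fintype.card ι * δ ^ 2) := by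
  have hindep : iIndepFun (fun j ω => S.indicator (fun _ => (1 : ℝ)) (Λ j ω) - μ.real S) P :=
    hΛindep.comp _ fun _ => (measurable_const.indicator hS).sub_const _
  have hoeffding := HasSubgaussianMGF.measure_sum_ge_le_of_iIndepFun hindep (s := Finset.univ)
    (fun j _ => hasSubgaussianMGF_indicator_sub_measureReal (hΛmeas j) (hΛlaw j) hS)
    (mul_nonneg (Nat.cast_nonneg (Fintype.card ι)) hδ)
  convert hoeffding using 2
  · ext ω
    simp only [Set.mem_ofPred_eq, Finset.sum_sub_distrib, Finset.sum_const, Finset.card_univ,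
      nsmul_eq_mul]
    constructor <;> intro h <;> linarith
  · rcases (Fintype.card ι).eq_zero_or_pos with h | h
    · simp [h]
    · simp only [Finset.sum_const, Finset.card_univ, nsmul_eq_mul]
      push_cast
      field_simp
      ring

lemma measureReal_mean_indicator_ge_le [IsProbabilityMeasure P] {ι : Type*} [Fintype ι]
    {Λ : ι → Ω → E} (hΛmeas : ∀ j, Measurable (Λ j)) (hΛindep : iIndepFun Λ P)
    (hΛlaw : ∀ j, P.map (Λ j) = μ) (hS : MeasurableSet S) {β δ : ℝ} (hδ : 0 ≤ δ)
    (hβ : μ.real S + δ ≤ β) :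
    P.real {ω | β ≤ (1 / Fintype.card ι : ℝ) * ∑ j, S.indicator (fun _ => (1 : ℝ)) (Λ j ω)}
      ≤ Real.exp (-2 * Fintype.card ι * δ ^ 2) := by
  rcases (Fintype.card ι).eq_zero_or_pos with hι | hι
  · simp [hι]
  refine (measureReal_mono fun ω hω => ?_).trans
    (measureReal_sum_indicator_ge_le hΛmeas hΛindep hΛlaw hS hδ)
  simp only [Set.mem_ofPred_eq] at hω ⊢
  rw [one_div_mul_eq_div, le_div_iff₀ (by exact_mod_cast hι)] at hω
  have := mul_le_mul_of_nonneg_left hβ (Nat.cast_nonneg' (α := ℝ) (Fintype.card ι))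
  linarith

end Hoeffding

theorem prob_sampled_not_subset_feasible_le_general
    {Ω : Type*} [MeasurableSpace Ω] (P : Measure Ω) [IsProbabilityMeasure P]
    {E : Type*} [MeasurableSpace E] (μ : Measure E) [IsProbabilityMeasure μ]
    {M : ℕ} (Λ : Fin M → Ω → E)
    (hΛmeas : ∀ j, Measurable (Λ j))
    (hΛindep : iIndepFun Λ P)
    (hΛlaw : ∀ j, Measure.map (Λ j) P = μ)
    {X : Type*} (Ξ : Finset X) {L : ℕ} (hLcard : Ξ.card = L)
    {N : ℕ}
    (G : Fin (2 * N) → X → Set E) (hG : ∀ k x, MeasurableSet (G k x))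
    {ε α : ℝ} (hα : α ∈ Set.Ico (0 : ℝ) ε) :
    (P {ω | ¬ ({x : X | x ∈ Ξ ∧ ∀ k : Fin (2 * N),
            1 - α ≤ (1 / M : ℝ) * ∑ j, (G k x).indicator (fun _ => (1 : ℝ)) (Λ j ω)}
          ⊆ {x : X | x ∈ Ξ ∧ ∀ k : Fin (2 * N), 1 - ε ≤ (μ (G k x)).toReal})}).toReal ≤
      L * Real.exp (-2 * M * (ε - α) ^ 2) := by
  set sampled : Ω → Set X := fun ω => {x | x ∈ Ξ ∧ ∀ k : Fin (2 * N),
    1 - α ≤ (1 / M : ℝ) * ∑ j, (G k x).indicator (fun _ => (1 : ℝ)) (Λ j ω)}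
  set feasible : Set X := {x | x ∈ Ξ ∧ ∀ k : Fin (2 * N), 1 - ε ≤ (μ (G k x)).toReal}
  have hcover : {ω | ¬ sampled ω ⊆ feasible} ⊆ ⋃ x ∈ Ξ, {ω | x ∈ sampled ω ∧ x ∉ feasible} := by
    intro ω hω
    obtain ⟨x, hx_sampled, hx_infeasible⟩ := Set.not_subset.mp hω
    exact Set.mem_biUnion hx_sampled.1 ⟨hx_sampled, hx_infeasible⟩
  have hpoint : ∀ x ∈ Ξ, P.real {ω | x ∈ sampled ω ∧ x ∉ feasible}
      ≤ Real.exp (-2 * M * (ε - α) ^ 2) := by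
    intro x hx
    by_cases hfeasible : x ∈ feasible
    · simp only [hfeasible, not_true_eq_false, and_false, Set.ofPred_false, measureReal_empty]
      positivity
    obtain ⟨k, hk⟩ : ∃ k, μ.real (G k x) + ε < 1 := by
      simpa [feasible, hx, measureReal_def] using hfeasible
    calc P.real {ω | x ∈ sampled ω ∧ x ∉ feasible}
        ≤ P.real {ω | 1 - α ≤ (1 / M : ℝ) *
            ∑ j, (G k x).indicator (fun _ => (1 : ℝ)) (Λ j ω)} :=
          measureReal_mono fun ω hω => hω.1.2 k
      _ ≤ Real.exp (-2 * M * (ε - α) ^ 2) := by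
          simpa only [Fintype.card_fin] using measureReal_mean_indicator_ge_le hΛmeas hΛindep
            hΛlaw (hG k x) (sub_nonneg.mpr hα.2.le) (by linarith)
  calc P.real {ω | ¬ sampled ω ⊆ feasible}
      ≤ P.real (⋃ x ∈ Ξ, {ω | x ∈ sampled ω ∧ x ∉ feasible}) :=
        measureReal_mono hcover (measure_ne_top _ _)
    _ ≤ ∑ x ∈ Ξ, P.real {ω | x ∈ sampled ω ∧ x ∉ feasible} := measureReal_biUnion_finset_le _ _
    _ ≤ ∑ _x ∈ Ξ, Real.exp (-2 * M * (ε - α) ^ 2) := Finset.sum_le_sum hpoint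
    _ = L * Real.exp (-2 * M * (ε - α) ^ 2) := by rw [Finset.sum_const, hLcard, nsmul_eq_mul]

/-- The probability that the sampled feasible set `𝕏₀^{α,M}(ω)` is not
contained in the feasible set `𝕏₀^ε` is at most `L·exp(−2M(ε−α)²)`. -/
theorem prob_sampled_not_subset_feasible_le
    {Ω : Type*} [MeasurableSpace Ω] (P : Measure Ω) [IsProbabilityMeasure P]
    {E : Type*} [MeasurableSpace E] (μ : Measure E) [IsProbabilityMeasure μ]
    {M : ℕ} (hM : 1 ≤ M) (Λ : Fin M → Ω → E)
    (hΛmeas : ∀ j, Measurable (Λ j))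
    (hΛindep : iIndepFun Λ P)
    (hΛlaw : ∀ j, Measure.map (Λ j) P = μ)
    {X : Type*} (Ξ : Finset X) {L : ℕ} (hLcard : Ξ.card = L) (hL : 1 ≤ L)
    {N : ℕ} (hN : 1 ≤ N)
    (G : Fin (2 * N) → X → Set E) (hG : ∀ k x, MeasurableSet (G k x))
    {ε α : ℝ} (hε : ε ∈ Set.Ioo (0 : ℝ) 1) (hα : α ∈ Set.Ico (0 : ℝ) ε) :
    (P {ω | ¬ ({x : X | x ∈ Ξ ∧ ∀ k : Fin (2 * N),
            1 - α ≤ (1 / M : ℝ) * ∑ j, (G k x).indicator (fun _ => (1 : ℝ)) (Λ j ω)}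
          ⊆ {x : X | x ∈ Ξ ∧ ∀ k : Fin (2 * N), 1 - ε ≤ (μ (G k x)).toReal})}).toReal ≤
      L * Real.exp (-2 * M * (ε - α) ^ 2) :=
  prob_sampled_not_subset_feasible_le_general P μ Λ hΛmeas hΛindep hΛlaw Ξ hLcard G hG hα
end

section
/- If for every row index j ∈ {1,…,t} the mean satisfies m_j ≤ x̄_j − sqrt((t−ε)/ε)·sqrt(V_j), then the probability that all t linear constraints hold simultaneously satisfies 𝒫({ω : (T·x(ω))_j ≤ x̄_j for all j ∈ {1,…,t}}) ≥ 1 − ε. -/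
/-!
Cantelli's one-sided Chebyshev inequality `P(X ≥ E X + a) ≤ V / (V + a²)` applied to row `j`
with `a = k √V_j`, `k = √((t - ε)/ε)`, bounds the probability that constraint `j` fails by
`1 / (1 + k²) = ε / t`; a union bound over the `t` rows leaves failure probability at most `ε`.
-/

open MeasureTheory ProbabilityTheory Matrix

namespace ProbabilityTheory

variable {Ω : Type*} [MeasurableSpace Ω] {μ : Measure Ω} [IsProbabilityMeasure μ] {X : Ω → ℝ}

lemma integral_sub_integral_add_const_sq (hX : MemLp X 2 μ) (u : ℝ) :
    ∫ ω, (X ω - μ[X] + u) ^ 2 ∂μ = Var[X; μ] + u ^ 2 := by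
  have hZ : MemLp (fun ω ↦ X ω + (u - μ[X])) 2 μ := hX.add (memLp_const _)
  have hmean : μ[fun ω ↦ X ω + (u - μ[X])] = u := by
    rw [integral_add (hX.integrable one_le_two) (integrable_const _)]
    simp
  have hvar := variance_eq_sub hZ
  rw [variance_add_const hX.1, hmean] at hvar
  simp only [Pi.pow_apply] at hvar
  simp_rw [sub_add_eq_add_sub, add_sub_assoc]
  linarith

/-- **Cantelli's inequality**. -/
lemma measureReal_ge_integral_add_le_variance_div_add_sq (hX : MemLp X 2 μ) {a : ℝ} (ha : 0 < a) :
    μ.real {ω | μ[X] + a ≤ X ω} ≤ Var[X; μ] / (Var[X; μ] + a ^ 2) := by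
  set V := Var[X; μ]
  have hV : 0 ≤ V := variance_nonneg X μ
  -- Markov's inequality for `(X - μ[X] + u)²` with the optimal shift `u = V / a`
  set u := V / a
  have hau : 0 < a + u := by positivity
  have hsub : {ω | μ[X] + a ≤ X ω} ⊆ {ω | (a + u) ^ 2 ≤ (X ω - μ[X] + u) ^ 2} := fun ω hω ↦
    pow_le_pow_left₀ hau.le (by simp only [Set.mem_ofPred_eq] at hω; linarith) 2
  have hmarkov := mul_meas_ge_le_integral_of_nonneg (f := fun ω ↦ (X ω - μ[X] + u) ^ 2)
    (.of_forall fun ω ↦ sq_nonneg _)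
    ((hX.sub (memLp_const μ[X])).add (memLp_const u)).integrable_sq ((a + u) ^ 2)
  rw [integral_sub_integral_add_const_sq hX] at hmarkov
  calc μ.real {ω | μ[X] + a ≤ X ω}
      ≤ μ.real {ω | (a + u) ^ 2 ≤ (X ω - μ[X] + u) ^ 2} := measureReal_mono hsub
    _ ≤ (V + u ^ 2) / (a + u) ^ 2 := by rw [le_div_iff₀ (by positivity)]; linarith
    _ = V / (V + a ^ 2) := by simp only [u]; field_simp; ring

lemma measureReal_gt_le_one_div_one_add_sq (hX : MemLp X 2 μ) {c k : ℝ}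
    (hk : 0 < k) (hmean : μ[X] ≤ c - k * √Var[X; μ]) :
    μ.real {ω | c < X ω} ≤ 1 / (1 + k ^ 2) := by
  rcases (variance_nonneg X μ).eq_or_lt with hV | hV
  · have hconst := ae_iff.1 (ae_eq_integral_of_variance_eq_zero hX hV.symm)
    have hnull : μ.real {ω | c < X ω} = 0 := by
      refine (measureReal_eq_zero_iff).2 (measure_mono_null ?_ hconst)
      intro ω hω h
      simp only [Set.mem_ofPred_eq, ← hV, Real.sqrt_zero, mul_zero, sub_zero] at hω hmean
      linarith
    rw [hnull]
    positivity
  · have ha : 0 < k * √Var[X; μ] := mul_pos hk (Real.sqrt_pos.2 hV)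
    calc μ.real {ω | c < X ω}
        ≤ μ.real {ω | μ[X] + k * √Var[X; μ] ≤ X ω} :=
          measureReal_mono fun ω (hω : c < X ω) ↦ show _ ≤ X ω by linarith
      _ ≤ Var[X; μ] / (Var[X; μ] + (k * √Var[X; μ]) ^ 2) :=
          measureReal_ge_integral_add_le_variance_div_add_sq hX ha
      _ = 1 / (1 + k ^ 2) := by
          rw [mul_pow, Real.sq_sqrt hV.le]
          field_simp

end ProbabilityTheory

namespace MeasureTheory

lemma one_sub_sum_measureReal_compl_le_measureReal_iInter {α ι : Type*} [MeasurableSpace α]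
    {μ : Measure α} [IsProbabilityMeasure μ] [Fintype ι] (s : ι → Set α) :
    1 - ∑ i, μ.real (s i)ᶜ ≤ μ.real (⋂ i, s i) := by
  have hcover := measureReal_union_le (μ := μ) (⋂ i, s i) (⋂ i, s i)ᶜ
  rw [Set.union_compl_self, probReal_univ, Set.compl_iInter] at hcover
  linarith [measureReal_iUnion_fintype_le (μ := μ) fun i ↦ (s i)ᶜ]

lemma memLp_const_dotProduct {α ι : Type*} [MeasurableSpace α] {μ : Measure α} [Fintype ι]
    {p : ENNReal} {f : α → ι → ℝ} (hf : ∀ i, MemLp (fun a ↦ f a i) p μ) (v : ι → ℝ) :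
    MemLp (fun a ↦ v ⬝ᵥ f a) p μ :=
  memLp_finsetSum _ fun i _ ↦ (hf i).const_mul (v i)

end MeasureTheory

theorem prob_all_rows_le_of_mean_tightened_general
    {Ω : Type*} [MeasurableSpace Ω] (P : Measure Ω) [IsProbabilityMeasure P]
    {r t : ℕ}
    (x : Ω → Fin r → ℝ) (hx : ∀ i, MemLp (fun ω => x ω i) 2 P)
    (T : Matrix (Fin t) (Fin r) ℝ) (xbar : Fin t → ℝ)
    {ε : ℝ} (hε : ε ∈ Set.Ioo (0 : ℝ) 1)
    (hmean : ∀ j : Fin t, ∫ ω, T j ⬝ᵥ x ω ∂P ≤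
      xbar j - Real.sqrt (((t : ℝ) - ε) / ε) *
        Real.sqrt (variance (fun ω => T j ⬝ᵥ x ω) P)) :
    1 - ε ≤ (P {ω | ∀ j : Fin t, T j ⬝ᵥ x ω ≤ xbar j}).toReal := by
  obtain ⟨hε0, hε1⟩ := hε
  have hrow (j : Fin t) : P.real {ω | T j ⬝ᵥ x ω ≤ xbar j}ᶜ ≤ ε / t := by
    have ht : (1 : ℝ) ≤ t := mod_cast j.pos
    have hk : 0 < ((t : ℝ) - ε) / ε := div_pos (by linarith) hε0
    simp only [Set.compl_ofPred, not_le]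
    calc _ ≤ 1 / (1 + √(((t : ℝ) - ε) / ε) ^ 2) :=
          measureReal_gt_le_one_div_one_add_sq (memLp_const_dotProduct hx (T j))
            (Real.sqrt_pos.2 hk) (hmean j)
      _ = ε / t := by
          rw [Real.sq_sqrt hk.le]
          field_simp [(zero_lt_one.trans_le ht).ne']
          ring
  have hfail : ∑ j, P.real {ω | T j ⬝ᵥ x ω ≤ xbar j}ᶜ ≤ ε := by
    refine (Finset.sum_le_card_nsmul _ _ _ fun j _ ↦ hrow j).trans ?_
    rcases t.eq_zero_or_pos with rfl | ht
    · simpa using hε0.le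
    · simp only [Finset.card_univ, Fintype.card_fin, nsmul_eq_mul]
      exact (mul_div_cancel₀ ε (by positivity)).le
  have hall := one_sub_sum_measureReal_compl_le_measureReal_iInter (μ := P)
    fun j ↦ {ω | T j ⬝ᵥ x ω ≤ xbar j}
  rw [← Set.ofPred_forall] at hall
  rw [← measureReal_def]
  linarith

/-- If for every row index `j` the mean satisfies
`m_j ≤ x̄_j − sqrt((t−ε)/ε)·sqrt(V_j)`, then all `t` linear constraints hold simultaneously
with probability at least `1 − ε`. -/
theorem prob_all_rows_le_of_mean_tightened
    {Ω : Type*} [MeasurableSpace Ω] (P : Measure Ω) [IsProbabilityMeasure P]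
    {r t : ℕ} (ht : 1 ≤ t)
    (x : Ω → Fin r → ℝ) (hx : ∀ i, MemLp (fun ω => x ω i) 2 P)
    (T : Matrix (Fin t) (Fin r) ℝ) (xbar : Fin t → ℝ)
    {ε : ℝ} (hε : ε ∈ Set.Ioo (0 : ℝ) 1)
    (hmean : ∀ j : Fin t, ∫ ω, T j ⬝ᵥ x ω ∂P ≤
      xbar j - Real.sqrt (((t : ℝ) - ε) / ε) *
        Real.sqrt (variance (fun ω => T j ⬝ᵥ x ω) P)) :
    1 - ε ≤ (P {ω | ∀ j : Fin t, T j ⬝ᵥ x ω ≤ xbar j}).toReal :=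
  prob_all_rows_le_of_mean_tightened_general P x hx T xbar hε hmean
end

section
/- There exists a constant C ∈ ℝ, independent of the choice of x'_0 ∈ ℝ^n, such that for every x'_0 ∈ ℝ^n, J_c(x'_0) = (x'_0)ᵀ 𝒜₁ x'_0 + x̂ᵀ 𝒜₂ x'_0 + C, where x̂ = E[x''_0], 𝒜₂ = Σ_{k=0}^{N−1} 2 (F^k)ᵀ Q Ψ_{k−1} + 2 (F^N)ᵀ Q_N Ψ_{N−1}, and 𝒜₁ = Σ_{k=0}^{N−1} [ Ψ_{k−1}ᵀ Q Ψ_{k−1} + (F_K^k)ᵀ Kᵀ R K F_K^k ] + Ψ_{N−1}ᵀ Q_N Ψ_{N−1}, with Ψ_{k−1} = Σ_{h=0}^{k−1} F^h G K F_K^{k−h−1} (and Ψ_{−1} = 0). -/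
open MeasureTheory Matrix

/-! The closed-loop state `x'` and the plant state `x''` are affine in `x'_0`:
`x'_k = F_K^k x'_0 + x'_k(0)` and `x''_k = Ψ_{k-1} x'_0 + x''_k(0)`, where the processes started
from `x'_0 = 0` do not depend on `x'_0`. Expanding each quadratic stage cost, only the means of
these processes enter the cross terms: `x'_k(0)` has mean `0` and `x''_k(0)` has mean `F^k x̂`,
both because the noise is centred. Everything else is a constant. -/

/-- `Psi F G K k` is the matrix `Ψ_{k−1} = Σ_{h=0}^{k−1} F^h G K F_K^{k−h−1}`
(so that `Psi F G K 0 = Ψ_{−1} = 0`), where `F_K = F + G K`. -/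
noncomputable def Psi {n m : ℕ} (F : Matrix (Fin n) (Fin n) ℝ)
    (G : Matrix (Fin n) (Fin m) ℝ) (K : Matrix (Fin m) (Fin n) ℝ) (k : ℕ) :
    Matrix (Fin n) (Fin n) ℝ :=
  ∑ h ∈ Finset.range k, F ^ h * G * K * (F + G * K) ^ (k - h - 1)

section RandomVectors

variable {Ω ι κ : Type*} [MeasurableSpace Ω] {P : Measure Ω} [Fintype ι]

lemma memLp_mulVec_apply {p : ENNReal} (A : Matrix κ ι ℝ) {X : Ω → ι → ℝ}
    (hX : ∀ i, MemLp (fun ω => X ω i) p P) (j : κ) :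
    MemLp (fun ω => (A *ᵥ X ω) j) p P := by
  simp only [mulVec, dotProduct]
  exact memLp_finsetSum _ fun i _ => (hX i).const_mul _

lemma integral_mulVec_add {A : Matrix κ ι ℝ} {X : Ω → ι → ℝ} {Z : Ω → κ → ℝ}
    (hX : ∀ i, Integrable (fun ω => X ω i) P) (hZ : ∀ j, Integrable (fun ω => Z ω j) P) :
    (fun j => ∫ ω, (A *ᵥ X ω + Z ω) j ∂P) =
      A *ᵥ (fun i => ∫ ω, X ω i ∂P) + fun j => ∫ ω, Z ω j ∂P := by
  funext j
  simp only [Pi.add_apply, mulVec, dotProduct]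
  rw [integral_add (integrable_finsetSum _ fun i _ => (hX i).const_mul _) (hZ j),
    integral_finsetSum _ fun i _ => (hX i).const_mul _]
  simp only [integral_const_mul]

lemma integrable_dotProduct_mulVec [Fintype κ] (A : Matrix ι κ ℝ) {X : Ω → ι → ℝ}
    {Y : Ω → κ → ℝ} (hX : ∀ i, MemLp (fun ω => X ω i) 2 P)
    (hY : ∀ j, MemLp (fun ω => Y ω j) 2 P) :
    Integrable (fun ω => X ω ⬝ᵥ A *ᵥ Y ω) P := by
  simp only [dotProduct]
  exact integrable_finsetSum _ fun i _ => (hX i).integrable_mul (memLp_mulVec_apply A hY i)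

lemma integrable_dotProduct_const {X : Ω → ι → ℝ} (hX : ∀ i, Integrable (fun ω => X ω i) P)
    (c : ι → ℝ) : Integrable (fun ω => X ω ⬝ᵥ c) P := by
  simp only [dotProduct]
  exact integrable_finsetSum _ fun i _ => (hX i).mul_const _

lemma integral_dotProduct_const {X : Ω → ι → ℝ} (hX : ∀ i, Integrable (fun ω => X ω i) P)
    (c : ι → ℝ) : ∫ ω, X ω ⬝ᵥ c ∂P = (fun i => ∫ ω, X ω i ∂P) ⬝ᵥ c := by
  simp only [dotProduct]
  rw [integral_finsetSum _ fun i _ => (hX i).mul_const _]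
  simp only [integral_mul_const]

lemma integral_const_add_dotProduct_mulVec [IsProbabilityMeasure P] (A : Matrix ι ι ℝ)
    (c : ι → ℝ) {X : Ω → ι → ℝ} (hX : ∀ i, MemLp (fun ω => X ω i) 2 P) :
    ∫ ω, (c + X ω) ⬝ᵥ A *ᵥ (c + X ω) ∂P =
      c ⬝ᵥ A *ᵥ c + (fun i => ∫ ω, X ω i ∂P) ⬝ᵥ (A *ᵥ c + c ᵥ* A) +
        ∫ ω, X ω ⬝ᵥ A *ᵥ X ω ∂P := by
  have hX1 : ∀ i, Integrable (fun ω => X ω i) P := fun i => (hX i).integrable one_le_two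
  have hexpand : ∀ ω, (c + X ω) ⬝ᵥ A *ᵥ (c + X ω) =
      c ⬝ᵥ A *ᵥ c + (X ω ⬝ᵥ (A *ᵥ c + c ᵥ* A) + X ω ⬝ᵥ A *ᵥ X ω) := fun ω => by
    rw [mulVec_add, dotProduct_add, add_dotProduct, add_dotProduct, dotProduct_add,
      dotProduct_mulVec c A (X ω), dotProduct_comm (c ᵥ* A)]
    ring
  have hlin := integrable_dotProduct_const hX1 (A *ᵥ c + c ᵥ* A)
  have hquad := integrable_dotProduct_mulVec A hX hX
  simp only [hexpand]
  rw [integral_add (integrable_const _) (hlin.add hquad : Integrable (fun ω => _ + _) P),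
    integral_add hlin hquad, integral_const, integral_dotProduct_const hX1]
  simp [add_assoc]

lemma dotProduct_transpose_mul_mul_mulVec {κ' : Type*} [Fintype κ] [Fintype κ']
    (M : Matrix ι κ ℝ) (A : Matrix ι ι ℝ) (N : Matrix ι κ' ℝ) (u : κ → ℝ) (v : κ' → ℝ) :
    u ⬝ᵥ (Mᵀ * A * N) *ᵥ v = (M *ᵥ u) ⬝ᵥ A *ᵥ (N *ᵥ v) := by
  rw [← mulVec_mulVec, ← mulVec_mulVec, dotProduct_mulVec, vecMul_transpose]

lemma integral_dotProduct_mulVec_self_of_isSymm [IsProbabilityMeasure P] {ι' : Type*}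
    [Fintype κ] [Fintype ι'] {A : Matrix ι ι ℝ} (hA : A.IsSymm) {M : Matrix ι κ ℝ}
    {L : Matrix ι ι' ℝ} {v : κ → ℝ} {x₀ : ι' → ℝ} {X Y : Ω → ι → ℝ}
    (hY : ∀ ω, Y ω = M *ᵥ v + X ω) (hX : ∀ i, MemLp (fun ω => X ω i) 2 P)
    (hmean : (fun i => ∫ ω, X ω i ∂P) = L *ᵥ x₀) :
    ∫ ω, Y ω ⬝ᵥ A *ᵥ Y ω ∂P =
      v ⬝ᵥ (Mᵀ * A * M) *ᵥ v + x₀ ⬝ᵥ ((2 : ℝ) • (Lᵀ * A * M)) *ᵥ v +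
        ∫ ω, X ω ⬝ᵥ A *ᵥ X ω ∂P := by
  have hsymm : (M *ᵥ v) ᵥ* A = A *ᵥ (M *ᵥ v) := by rw [← vecMul_transpose A, hA]
  simp only [hY]
  rw [integral_const_add_dotProduct_mulVec A _ hX, hmean, hsymm, smul_mulVec, dotProduct_smul,
    dotProduct_transpose_mul_mul_mulVec, dotProduct_transpose_mul_mul_mulVec, dotProduct_add,
    smul_eq_mul, two_mul]

lemma integral_dotProduct_mulVec_self_of_integral_eq_zero [IsProbabilityMeasure P] [Fintype κ]
    (A : Matrix ι ι ℝ) {M : Matrix ι κ ℝ} {v : κ → ℝ} {X Y : Ω → ι → ℝ}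
    (hY : ∀ ω, Y ω = M *ᵥ v + X ω) (hX : ∀ i, MemLp (fun ω => X ω i) 2 P)
    (hmean : (fun i => ∫ ω, X ω i ∂P) = 0) :
    ∫ ω, Y ω ⬝ᵥ A *ᵥ Y ω ∂P = v ⬝ᵥ (Mᵀ * A * M) *ᵥ v + ∫ ω, X ω ⬝ᵥ A *ᵥ X ω ∂P := by
  simp only [hY]
  rw [integral_const_add_dotProduct_mulVec A _ hX, hmean, zero_dotProduct, add_zero,
    dotProduct_transpose_mul_mul_mulVec]

lemma memLp_apply_of_succ_eq_mulVec_add {p : ENNReal} {A : Matrix ι ι ℝ}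
    {Y Z : ℕ → Ω → ι → ℝ} (hY0 : ∀ i, MemLp (fun ω => Y 0 ω i) p P)
    (hZ : ∀ k i, MemLp (fun ω => Z k ω i) p P) (hY : ∀ k ω, Y (k + 1) ω = A *ᵥ Y k ω + Z k ω)
    (k : ℕ) (i : ι) : MemLp (fun ω => Y k ω i) p P := by
  induction k generalizing i with
  | zero => exact hY0 i
  | succ k ih =>
    simp only [hY, Pi.add_apply]
    exact (memLp_mulVec_apply A ih i).add (hZ k i)

lemma integral_apply_eq_pow_mulVec_of_succ_eq_mulVec_add [DecidableEq ι] {A : Matrix ι ι ℝ}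
    {Y Z : ℕ → Ω → ι → ℝ} (hY0 : ∀ i, Integrable (fun ω => Y 0 ω i) P)
    (hZint : ∀ k i, Integrable (fun ω => Z k ω i) P) (hZ : ∀ k i, ∫ ω, Z k ω i ∂P = 0)
    (hY : ∀ k ω, Y (k + 1) ω = A *ᵥ Y k ω + Z k ω) (k : ℕ) :
    (fun i => ∫ ω, Y k ω i ∂P) = A ^ k *ᵥ fun i => ∫ ω, Y 0 ω i ∂P := by
  have hYint : ∀ k i, Integrable (fun ω => Y k ω i) P := by
    simp only [← memLp_one_iff_integrable] at hY0 hZint ⊢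
    exact memLp_apply_of_succ_eq_mulVec_add hY0 hZint hY
  induction k with
  | zero => simp
  | succ k ih =>
    simp only [hY]
    rw [integral_mulVec_add (hYint k) (hZint k), ih, funext (hZ k), pow_succ', mulVec_mulVec]
    exact add_zero _

lemma integral_finsetSum_add_add {α : Type*} (s : Finset α) {f g : α → Ω → ℝ} {h : Ω → ℝ}
    (hf : ∀ a, Integrable (f a) P) (hg : ∀ a, Integrable (g a) P) (hh : Integrable h P) :
    ∫ ω, (∑ a ∈ s, (f a ω + g a ω)) + h ω ∂P =
      ∑ a ∈ s, (∫ ω, f a ω ∂P + ∫ ω, g a ω ∂P) + ∫ ω, h ω ∂P := by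
  have hfg : ∀ a ∈ s, Integrable (fun ω => f a ω + g a ω) P := fun a _ => (hf a).add (hg a)
  rw [integral_add (integrable_finsetSum s hfg) hh, integral_finsetSum s hfg]
  exact congrArg (· + _) (Finset.sum_congr rfl fun a _ => integral_add (hf a) (hg a))

end RandomVectors

lemma eq_pow_mulVec_add_of_succ_eq_mulVec_add {α ι : Type*} [Fintype ι] [DecidableEq ι]
    {A : Matrix ι ι ℝ} {x : (ι → ℝ) → ℕ → α → ι → ℝ} {w : ℕ → α → ι → ℝ}
    (h0 : ∀ v a, x v 0 a = v) (hrec : ∀ v k a, x v (k + 1) a = A *ᵥ x v k a + w k a)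
    (v : ι → ℝ) (k : ℕ) (a : α) :
    x v k a = A ^ k *ᵥ v + x 0 k a := by
  induction k generalizing a with
  | zero => simp [h0]
  | succ k ih =>
    rw [hrec v, hrec 0, ih, mulVec_add, mulVec_mulVec, ← pow_succ', add_assoc]

lemma Psi_succ {n m : ℕ} (F : Matrix (Fin n) (Fin n) ℝ) (G : Matrix (Fin n) (Fin m) ℝ)
    (K : Matrix (Fin m) (Fin n) ℝ) (k : ℕ) :
    Psi F G K (k + 1) = F * Psi F G K k + G * K * (F + G * K) ^ k := by
  rw [Psi, Psi, Finset.sum_range_succ', Finset.mul_sum]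
  congr 1
  · refine Finset.sum_congr rfl fun h _ => ?_
    rw [Nat.succ_sub_succ, pow_succ']
    simp only [Matrix.mul_assoc]
  · simp

lemma eq_Psi_mulVec_add_of_succ_eq {α : Type*} {n m : ℕ} {F : Matrix (Fin n) (Fin n) ℝ}
    {G : Matrix (Fin n) (Fin m) ℝ} {K : Matrix (Fin m) (Fin n) ℝ}
    {x' x'' : (Fin n → ℝ) → ℕ → α → Fin n → ℝ} {x₀ : α → Fin n → ℝ} {w : ℕ → α → Fin n → ℝ}
    (hx' : ∀ v k a, x' v k a = (F + G * K) ^ k *ᵥ v + x' 0 k a)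
    (h0 : ∀ v a, x'' v 0 a = x₀ a)
    (hrec : ∀ v k a, x'' v (k + 1) a = F *ᵥ x'' v k a + (G * K) *ᵥ x' v k a + w k a)
    (v : Fin n → ℝ) (k : ℕ) (a : α) :
    x'' v k a = Psi F G K k *ᵥ v + x'' 0 k a := by
  induction k generalizing a with
  | zero => simp [h0, Psi]
  | succ k ih =>
    rw [hrec v, hrec 0, ih, hx' v, Psi_succ, mulVec_add, mulVec_add, add_mulVec,
      mulVec_mulVec, mulVec_mulVec]
    abel

theorem expected_cost_quadratic_in_initial_state_general
    {n m : ℕ} {Ω : Type*} [MeasurableSpace Ω]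
    (P : Measure Ω) [IsProbabilityMeasure P]
    (F : Matrix (Fin n) (Fin n) ℝ) (G : Matrix (Fin n) (Fin m) ℝ)
    (K : Matrix (Fin m) (Fin n) ℝ)
    (Q QN : Matrix (Fin n) (Fin n) ℝ) (R : Matrix (Fin m) (Fin m) ℝ)
    (hQ : Q.IsSymm) (hQN : QN.IsSymm)
    {N : ℕ}
    (x0'' : Ω → Fin n → ℝ) (hx0'' : ∀ i, MemLp (fun ω => x0'' ω i) 2 P)
    (w' w'' : ℕ → Ω → Fin n → ℝ)
    (hw' : ∀ k i, MemLp (fun ω => w' k ω i) 2 P)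
    (hw'' : ∀ k i, MemLp (fun ω => w'' k ω i) 2 P)
    (hw'mean : ∀ k i, ∫ ω, w' k ω i ∂P = 0)
    (hw''mean : ∀ k i, ∫ ω, w'' k ω i ∂P = 0)
    (x' x'' : (Fin n → ℝ) → ℕ → Ω → Fin n → ℝ)
    (h0' : ∀ v ω, x' v 0 ω = v)
    (h0'' : ∀ v ω, x'' v 0 ω = x0'' ω)
    (hrec' : ∀ v k ω, x' v (k + 1) ω = (F + G * K).mulVec (x' v k ω) + w' k ω)
    (hrec'' : ∀ v k ω, x'' v (k + 1) ω =
      F.mulVec (x'' v k ω) + (G * K).mulVec (x' v k ω) + w'' k ω) :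
    ∃ C : ℝ, ∀ v : Fin n → ℝ,
      (∫ ω, (∑ k ∈ Finset.range N,
            (x'' v k ω ⬝ᵥ Q.mulVec (x'' v k ω) +
              x' v k ω ⬝ᵥ (Kᵀ * R * K).mulVec (x' v k ω))) +
          x'' v N ω ⬝ᵥ QN.mulVec (x'' v N ω) ∂P) =
        v ⬝ᵥ ((∑ k ∈ Finset.range N,
              ((Psi F G K k)ᵀ * Q * Psi F G K k +
                ((F + G * K) ^ k)ᵀ * Kᵀ * R * K * (F + G * K) ^ k)) +
            (Psi F G K N)ᵀ * QN * Psi F G K N).mulVec v +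
          (fun i => ∫ ω, x0'' ω i ∂P) ⬝ᵥ ((∑ k ∈ Finset.range N,
              (2 : ℝ) • ((F ^ k)ᵀ * Q * Psi F G K k)) +
            (2 : ℝ) • ((F ^ N)ᵀ * QN * Psi F G K N)).mulVec v + C := by
  have hx' := eq_pow_mulVec_add_of_succ_eq_mulVec_add h0' hrec'
  have hx'' := eq_Psi_mulVec_add_of_succ_eq hx' h0'' hrec''
  have hrec''_grouped v k ω :
      x'' v (k + 1) ω = F *ᵥ x'' v k ω + ((G * K) *ᵥ x' v k ω + w'' k ω) := by
    rw [hrec'', add_assoc]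
  have hp : ∀ v k i, MemLp (fun ω => x' v k ω i) 2 P := fun v =>
    memLp_apply_of_succ_eq_mulVec_add (by simp only [h0']; exact fun i => memLp_const _) hw'
      (hrec' v)
  have hZ v k i : MemLp (fun ω => ((G * K) *ᵥ x' v k ω + w'' k ω) i) 2 P :=
    (memLp_mulVec_apply _ (hp v k) i).add (hw'' k i)
  have hq : ∀ v k i, MemLp (fun ω => x'' v k ω i) 2 P := fun v =>
    memLp_apply_of_succ_eq_mulVec_add (by simpa only [h0''] using hx0'') (hZ v)
      (hrec''_grouped v)
  have hpmean k : (fun i => ∫ ω, x' 0 k ω i ∂P) = 0 := by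
    rw [integral_apply_eq_pow_mulVec_of_succ_eq_mulVec_add (by simp [h0'])
      (fun k i => (hw' k i).integrable one_le_two) hw'mean (hrec' 0) k]
    simp [h0', ← Pi.zero_def]
  have hZmean k i : ∫ ω, ((G * K) *ᵥ x' 0 k ω + w'' k ω) i ∂P = 0 := by
    rw [congrFun (integral_mulVec_add (fun i => (hp 0 k i).integrable one_le_two)
      fun i => (hw'' k i).integrable one_le_two) i, hpmean, funext (hw''mean k)]
    simp
  have hqmean k : (fun i => ∫ ω, x'' 0 k ω i ∂P) = F ^ k *ᵥ fun i => ∫ ω, x0'' ω i ∂P := by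
    have hq0 i : Integrable (fun ω => x'' 0 0 ω i) P := by
      simpa only [h0''] using (hx0'' i).integrable one_le_two
    rw [integral_apply_eq_pow_mulVec_of_succ_eq_mulVec_add hq0
      (fun k i => (hZ 0 k i).integrable one_le_two) hZmean (hrec''_grouped 0) k]
    simp only [h0'']
  refine ⟨(∑ k ∈ Finset.range N, ((∫ ω, x'' 0 k ω ⬝ᵥ Q *ᵥ x'' 0 k ω ∂P) +
      ∫ ω, x' 0 k ω ⬝ᵥ (Kᵀ * R * K) *ᵥ x' 0 k ω ∂P)) +
      ∫ ω, x'' 0 N ω ⬝ᵥ QN *ᵥ x'' 0 N ω ∂P, fun v => ?_⟩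
  rw [integral_finsetSum_add_add _ (fun k => integrable_dotProduct_mulVec Q (hq v k) (hq v k))
    (fun k => integrable_dotProduct_mulVec (Kᵀ * R * K) (hp v k) (hp v k))
    (integrable_dotProduct_mulVec QN (hq v N) (hq v N))]
  simp only [
    fun k => integral_dotProduct_mulVec_self_of_isSymm hQ (hx'' v k) (hq 0 k) (hqmean k),
    integral_dotProduct_mulVec_self_of_isSymm hQN (hx'' v N) (hq 0 N) (hqmean N),
    fun k => integral_dotProduct_mulVec_self_of_integral_eq_zero (Kᵀ * R * K) (hx' v k) (hp 0 k)
      (hpmean k)]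
  simp only [add_mulVec, sum_mulVec, dotProduct_add, dotProduct_sum, Finset.sum_add_distrib,
    Matrix.mul_assoc]
  ring

/-- There is a constant `C`, independent of `x'_0`, such that the expected
finite-horizon quadratic cost satisfies
`J_c(x'_0) = (x'_0)ᵀ 𝒜₁ x'_0 + x̂ᵀ 𝒜₂ x'_0 + C` with `x̂ = E[x''_0]`,
`𝒜₂ = Σ_{k<N} 2 (F^k)ᵀ Q Ψ_{k−1} + 2 (F^N)ᵀ Q_N Ψ_{N−1}` and
`𝒜₁ = Σ_{k<N} [Ψ_{k−1}ᵀ Q Ψ_{k−1} + (F_K^k)ᵀ Kᵀ R K F_K^k] + Ψ_{N−1}ᵀ Q_N Ψ_{N−1}`. -/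
theorem expected_cost_quadratic_in_initial_state
    {n m : ℕ} {Ω : Type*} [MeasurableSpace Ω]
    (P : Measure Ω) [IsProbabilityMeasure P]
    (F : Matrix (Fin n) (Fin n) ℝ) (G : Matrix (Fin n) (Fin m) ℝ)
    (K : Matrix (Fin m) (Fin n) ℝ)
    (Q QN : Matrix (Fin n) (Fin n) ℝ) (R : Matrix (Fin m) (Fin m) ℝ)
    (hQ : Q.IsSymm) (hQN : QN.IsSymm) (hR : R.IsSymm)
    {N : ℕ} (hN : 1 ≤ N)
    (x0'' : Ω → Fin n → ℝ) (hx0'' : ∀ i, MemLp (fun ω => x0'' ω i) 2 P)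
    (w' w'' : ℕ → Ω → Fin n → ℝ)
    (hw' : ∀ k i, MemLp (fun ω => w' k ω i) 2 P)
    (hw'' : ∀ k i, MemLp (fun ω => w'' k ω i) 2 P)
    (hw'mean : ∀ k i, ∫ ω, w' k ω i ∂P = 0)
    (hw''mean : ∀ k i, ∫ ω, w'' k ω i ∂P = 0)
    (hindep : ProbabilityTheory.iIndepFun
      (fun a : Option (ℕ ⊕ ℕ) => a.elim x0'' (Sum.elim w' w'')) P)
    (x' x'' : (Fin n → ℝ) → ℕ → Ω → Fin n → ℝ)
    (h0' : ∀ v ω, x' v 0 ω = v)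
    (h0'' : ∀ v ω, x'' v 0 ω = x0'' ω)
    (hrec' : ∀ v k ω, x' v (k + 1) ω = (F + G * K).mulVec (x' v k ω) + w' k ω)
    (hrec'' : ∀ v k ω, x'' v (k + 1) ω =
      F.mulVec (x'' v k ω) + (G * K).mulVec (x' v k ω) + w'' k ω) :
    ∃ C : ℝ, ∀ v : Fin n → ℝ,
      (∫ ω, (∑ k ∈ Finset.range N,
            (x'' v k ω ⬝ᵥ Q.mulVec (x'' v k ω) +
              x' v k ω ⬝ᵥ (Kᵀ * R * K).mulVec (x' v k ω))) +
          x'' v N ω ⬝ᵥ QN.mulVec (x'' v N ω) ∂P) =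
        v ⬝ᵥ ((∑ k ∈ Finset.range N,
              ((Psi F G K k)ᵀ * Q * Psi F G K k +
                ((F + G * K) ^ k)ᵀ * Kᵀ * R * K * (F + G * K) ^ k)) +
            (Psi F G K N)ᵀ * QN * Psi F G K N).mulVec v +
          (fun i => ∫ ω, x0'' ω i ∂P) ⬝ᵥ ((∑ k ∈ Finset.range N,
              (2 : ℝ) • ((F ^ k)ᵀ * Q * Psi F G K k)) +
            (2 : ℝ) • ((F ^ N)ᵀ * QN * Psi F G K N)).mulVec v + C :=
  expected_cost_quadratic_in_initial_state_general P F G K Q QN R hQ hQN x0'' hx0'' w' w'' hw' hw''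
    hw'mean hw''mean x' x'' h0' h0'' hrec' hrec''
end
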